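/- Under the convergence-theorem hypotheses, the regularised residual vanishes in the limit: if x^(l) minimises T(·; α^(l), y^(l), F^(l)), x^(l) → x† in τ, y^(l) → y in σ, F^(l) → F in the d_{K,L}-sense, F(x₀) = y for some x₀ ∈ D, S(y,y^(l)) + d_{K,L}(F^(l),F) → 0 and Σ_k α_k^(l) → 0, then S(F(x†), y) = 0, hence F(x†) = y. -/

import Mathlib

open Filter Topology
open scoped ENNReal

/-- Convergence of a sequence in `Y` with respect to the topology `σ` induced by the
pseudo-metrics `d^(z)(y,ỹ) = |S(z,y) − S(z,ỹ)|`: `y^(l) → p` iff `S(z, y^(l)) → S(z,p)`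
for every `z ∈ Y`. -/
def SigmaTendsto {Y : Type*} (S : Y → Y → ℝ) (y : ℕ → Y) (p : Y) : Prop :=
  ∀ z : Y, Tendsto (fun l => S z (y l)) atTop (nhds (S z p))

/-- Sequential compactness of a subset of `Y` with respect to the topology `σ`. -/
def SeqCompactSigma {Y : Type*} (S : Y → Y → ℝ) (L : Set Y) : Prop :=
  ∀ y : ℕ → Y, (∀ l, y l ∈ L) →
    ∃ p ∈ L, ∃ φ : ℕ → ℕ, StrictMono φ ∧ SigmaTendsto S (fun l => y (φ l)) p

/-- Sequential lower semi-continuity of `(x,y) ↦ S(F(x),y)` with respect to `τ × σ`. -/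
def SeqLSCop {X Y : Type*} [TopologicalSpace X] (S : Y → Y → ℝ) (F : X → Y) : Prop :=
  ∀ (x : ℕ → X) (x₀ : X) (y : ℕ → Y) (y₀ : Y),
    Tendsto x atTop (nhds x₀) → SigmaTendsto S y y₀ →
      S (F x₀) y₀ ≤ liminf (fun l => S (F (x l)) (y l)) atTop

/-- The pseudo-metric `d_{K,L}(F,G) = sup {|S(F(x),z) − S(G(x),z)| : x ∈ K, z ∈ L}`
(with values in `[0,∞]`). -/
noncomputable def dKL {X Y : Type*} (S : Y → Y → ℝ) (K : Set X) (L : Set Y)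
    (F G : X → Y) : ℝ≥0∞ :=
  ⨆ x ∈ K, ⨆ z ∈ L, ENNReal.ofReal |S (F x) z - S (G x) z|

/-- Convergence of operators `F^(l) → F` with respect to `τ`: `d_{K,L}(F^(l),F) → 0`
for every sequentially `τ`-compact `K ⊆ X` and sequentially `σ`-compact `L ⊆ Y`. -/
def OpTendsto {X Y : Type*} [TopologicalSpace X] (S : Y → Y → ℝ)
    (F' : ℕ → X → Y) (F : X → Y) : Prop :=
  ∀ (K : Set X) (L : Set Y), IsSeqCompact K → SeqCompactSigma S L →
    Tendsto (fun l => dKL S K L (F' l) F) atTop (nhds 0)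
/-- Sequential `τ`-coercivity: every sequence on which `R` is (finitely) bounded has a
`τ`-convergent subsequence. -/
def SeqCoercive {X : Type*} [TopologicalSpace X] (R : X → ℝ≥0∞) : Prop :=
  ∀ (u : ℕ → X) (c : ℝ≥0∞), c ≠ ⊤ → (∀ l, R (u l) ≤ c) →
    ∃ (x : X) (φ : ℕ → ℕ), StrictMono φ ∧ Tendsto (fun l => u (φ l)) atTop (nhds x)

/-- Sequential `τ`-lower semi-continuity of `R : X → [0,∞]`. -/
def SeqLSC {X : Type*} [TopologicalSpace X] (R : X → ℝ≥0∞) : Prop :=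
  ∀ (u : ℕ → X) (x : X), Tendsto u atTop (nhds x) →
    R x ≤ liminf (fun l => R (u l)) atTop

/-- The class `F(τ)`: `(x,y) ↦ S(F(x),y)` is sequentially `(τ×σ)`-lower semi-continuous and
the joint domain `D` of the regularisation terms is dense in the required sense. -/
def MemFtau {X Y : Type*} [TopologicalSpace X] {n : ℕ} (S : Y → Y → ℝ)
    (R : Fin n → X → ℝ≥0∞) (F : X → Y) : Prop :=
  SeqLSCop S F ∧
  ∀ (x : X) (y : Y), ∃ u : ℕ → X,
    (∀ l k, R k (u l) ≠ ⊤) ∧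
    Tendsto u atTop (nhds x) ∧
    (∀ k, Tendsto (fun l => R k (u l)) atTop (nhds (R k x))) ∧
    Tendsto (fun l => S (F (u l)) y) atTop (nhds (S (F x) y))

/-- The multi-parameter Tikhonov functional
`T(x; α, y, F) = S(F(x),y) + Σ_k α_k R_k(x)`, with the convention `α_k R_k(x) = 0` when
`α_k = 0` and `R_k(x) = ∞`. -/
noncomputable def Tik {X Y : Type*} {n : ℕ} (S : Y → Y → ℝ) (R : Fin n → X → ℝ≥0∞)
    (α : Fin n → ℝ) (y : Y) (F : X → Y) (x : X) : ℝ≥0∞ :=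
  ENNReal.ofReal (S (F x) y) + ∑ k, ENNReal.ofReal (α k) * R k x

/-!
Testing the minimality of `x^(l)` against the exact solution `x₀` bounds the residual by
`S(F(x^(l)), y^(l)) ≤ S(y, y^(l)) + 2 d_{K,L}(F^(l), F) + (Σ_k α_k^(l)) Σ_k R_k(x₀)`, where
`K = {x₀, x†} ∪ {x^(l)}` and `L = {y} ∪ {y^(l)}` are sequentially compact because they contain
the limits of their sequences. All three terms tend to zero, and the lower semi-continuity of
`(x, z) ↦ S(F(x), z)` gives `S(F(x†), y) ≤ liminf S(F(x^(l)), y^(l)) = 0`.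
-/

section SeqCompact

variable {X : Type*} [TopologicalSpace X]

theorem IsSeqCompact.insert {s : Set X} (hs : IsSeqCompact s) (a : X) :
    IsSeqCompact (insert a s) := by
  intro v hv
  by_cases ha : ∃ᶠ n in atTop, v n = a
  · obtain ⟨φ, hφ, hφa⟩ := extraction_of_frequently_atTop ha
    refine ⟨a, Set.mem_insert a s, φ, hφ, ?_⟩
    simpa only [Function.comp_def, hφa] using tendsto_const_nhds
  · have hfreq : ∃ᶠ n in atTop, v n ∈ s :=
      (not_frequently.1 ha).frequently.mono fun n hne => (hv n).resolve_left hne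
    obtain ⟨b, hb, φ, hφ, hlim⟩ := hs.subseq_of_frequently_in hfreq
    exact ⟨b, Set.mem_insert_of_mem a hb, φ, hφ, hlim⟩

theorem Filter.Tendsto.isSeqCompact_insert_range {u : ℕ → X} {p : X}
    (hu : Tendsto u atTop (𝓝 p)) : IsSeqCompact (insert p (Set.range u)) := by
  intro v hv
  by_cases hrep : ∃ q, ∃ᶠ n in atTop, v n = q
  · obtain ⟨q, hq⟩ := hrep
    obtain ⟨n₀, rfl⟩ := hq.exists
    obtain ⟨φ, hφ, hφq⟩ := extraction_of_frequently_atTop hq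
    refine ⟨v n₀, hv n₀, φ, hφ, ?_⟩
    simpa only [Function.comp_def, hφq] using tendsto_const_nhds
  · -- No value repeats infinitely often, so `v` itself tends to `p`: only finitely many `u k`
    -- lie outside a neighbourhood of `p`, and each is taken by finitely many `v n`.
    push Not at hrep
    refine ⟨p, Set.mem_insert p _, id, strictMono_id, fun U hU => ?_⟩
    obtain ⟨N, hN⟩ := eventually_atTop.1 (hu hU)
    have hfar : ∀ᶠ n in atTop, ∀ q ∈ u '' Set.Iio N, v n ≠ q :=
      ((Set.finite_Iio N).image u).eventually_all.2 fun q _ => hrep q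
    show ∀ᶠ n in atTop, v n ∈ U
    filter_upwards [hfar] with n hn
    rcases hv n with hp | ⟨k, hk⟩
    · exact hp ▸ mem_of_mem_nhds hU
    · have hNk : N ≤ k := not_lt.1 fun hk' => hn (u k) ⟨k, hk', rfl⟩ hk.symm
      exact hk ▸ hN k hNk

end SeqCompact

section Sigma

variable {Y : Type*} (S : Y → Y → ℝ)

/-- The topology `σ`: the coarsest one making every `S z · : Y → ℝ` continuous. -/
abbrev sigmaTopology : TopologicalSpace Y :=
  TopologicalSpace.induced (fun y z => S z y) inferInstance

theorem sigmaTendsto_iff_tendsto {u : ℕ → Y} {p : Y} :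
    SigmaTendsto S u p ↔ Tendsto u atTop (@nhds Y (sigmaTopology S) p) := by
  rw [sigmaTopology, nhds_induced, tendsto_comap_iff, tendsto_pi_nhds]
  rfl

theorem SigmaTendsto.seqCompactSigma_insert_range {u : ℕ → Y} {p : Y}
    (h : SigmaTendsto S u p) : SeqCompactSigma S (insert p (Set.range u)) := by
  let _ : TopologicalSpace Y := sigmaTopology S
  intro v hv
  obtain ⟨q, hq, φ, hφ, hlim⟩ :=
    ((sigmaTendsto_iff_tendsto S).1 h).isSeqCompact_insert_range hv
  exact ⟨q, hq, φ, hφ, (sigmaTendsto_iff_tendsto S).2 hlim⟩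

end Sigma

section Tikhonov

variable {X Y : Type*} {n : ℕ} (S : Y → Y → ℝ)

theorem dKL_comm (K : Set X) (L : Set Y) (F G : X → Y) : dKL S K L F G = dKL S K L G F := by
  simp only [dKL, abs_sub_comm]

theorem ofReal_le_add_dKL {K : Set X} {L : Set Y} (F G : X → Y) {x : X} {z : Y}
    (hx : x ∈ K) (hz : z ∈ L) :
    ENNReal.ofReal (S (F x) z) ≤ ENNReal.ofReal (S (G x) z) + dKL S K L F G := by
  calc ENNReal.ofReal (S (F x) z)
      ≤ ENNReal.ofReal (S (G x) z + |S (F x) z - S (G x) z|) :=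
        ENNReal.ofReal_le_ofReal (by linarith [le_abs_self (S (F x) z - S (G x) z)])
    _ ≤ ENNReal.ofReal (S (G x) z) + ENNReal.ofReal |S (F x) z - S (G x) z| :=
        ENNReal.ofReal_add_le
    _ ≤ ENNReal.ofReal (S (G x) z) + dKL S K L F G := by
        gcongr
        exact le_iSup₂_of_le x hx (le_iSup₂_of_le z hz le_rfl)

theorem sum_ofReal_mul_le_ofReal_sum_mul_sum {ι : Type*} (s : Finset ι) {α : ι → ℝ}
    (hα : ∀ k, 0 ≤ α k) (r : ι → ℝ≥0∞) :
    ∑ k ∈ s, ENNReal.ofReal (α k) * r k ≤ ENNReal.ofReal (∑ k ∈ s, α k) * ∑ k ∈ s, r k := by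
  rw [Finset.mul_sum]
  gcongr with k hk
  exact Finset.single_le_sum (fun j _ => hα j) hk

theorem ofReal_residual_le_of_tik_le (R : Fin n → X → ℝ≥0∞) {α : Fin n → ℝ}
    (hα : ∀ k, 0 ≤ α k) {F G : X → Y} {K : Set X} {L : Set Y} {x x₀ : X} {y z : Y}
    (hx : x ∈ K) (hx₀ : x₀ ∈ K) (hz : z ∈ L) (hx₀sol : F x₀ = y)
    (hmin : Tik S R α z G x ≤ Tik S R α z G x₀) :
    ENNReal.ofReal (S (F x) z) ≤
      ENNReal.ofReal (S y z) + 2 * dKL S K L G F +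
        ENNReal.ofReal (∑ k, α k) * ∑ k, R k x₀ := by
  have hpenalty := sum_ofReal_mul_le_ofReal_sum_mul_sum Finset.univ hα fun k => R k x₀
  have hG : ENNReal.ofReal (S (G x) z) ≤ Tik S R α z G x := le_self_add
  calc ENNReal.ofReal (S (F x) z)
      ≤ ENNReal.ofReal (S (G x) z) + dKL S K L G F := by
        rw [dKL_comm]; exact ofReal_le_add_dKL S F G hx hz
    _ ≤ ENNReal.ofReal (S (G x₀) z) + ∑ k, ENNReal.ofReal (α k) * R k x₀ + dKL S K L G F := by
        gcongr; exact hG.trans hmin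
    _ ≤ ENNReal.ofReal (S y z) + dKL S K L G F + ENNReal.ofReal (∑ k, α k) * ∑ k, R k x₀ +
          dKL S K L G F := by
        gcongr; exact hx₀sol ▸ ofReal_le_add_dKL S G F hx₀ hz
    _ = _ := by ring

end Tikhonov

theorem residual_vanishes_general {X Y : Type*} [TopologicalSpace X] {n : ℕ}
    (S : Y → Y → ℝ) (hS0 : ∀ y z : Y, 0 ≤ S y z) (hSdef : ∀ y z : Y, S y z = 0 ↔ y = z)
    (R : Fin n → X → ℝ≥0∞)
    (F : X → Y) (F' : ℕ → X → Y) (hF : MemFtau S R F)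
    (hop : OpTendsto S F' F)
    (y : Y) (x₀ : X) (hx₀D : ∀ k, R k x₀ ≠ ⊤) (hx₀sol : F x₀ = y)
    (y' : ℕ → Y) (hy : SigmaTendsto S y' y)
    (α : ℕ → Fin n → ℝ) (hα : ∀ l k, 0 ≤ α l k)
    (hαto0 : Tendsto (fun l => ∑ k, α l k) atTop (nhds 0))
    (x' : ℕ → X)
    (hmin : ∀ l x, Tik S R (α l) (y' l) (F' l) (x' l) ≤ Tik S R (α l) (y' l) (F' l) x)
    (xdag : X) (hxdag : Tendsto x' atTop (nhds xdag)) :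
    S (F xdag) y = 0 ∧ F xdag = y := by
  set K := insert x₀ (insert xdag (Set.range x'))
  set L := insert y (Set.range y')
  have hd : Tendsto (fun l => dKL S K L (F' l) F) atTop (𝓝 0) :=
    hop K L (hxdag.isSeqCompact_insert_range.insert x₀) (hy.seqCompactSigma_insert_range S)
  have hdata : Tendsto (fun l => ENNReal.ofReal (S y (y' l))) atTop (𝓝 0) := by
    simpa [(hSdef y y).2 rfl] using ENNReal.tendsto_ofReal (hy y)
  have hpenalty : Tendsto (fun l => ENNReal.ofReal (∑ k, α l k) * ∑ k, R k x₀) atTop (𝓝 0) := by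
    simpa using ENNReal.Tendsto.mul_const (ENNReal.tendsto_ofReal hαto0)
      (Or.inr (ENNReal.sum_ne_top.2 fun k _ => hx₀D k))
  have hbound : Tendsto (fun l => ENNReal.ofReal (S y (y' l)) + 2 * dKL S K L (F' l) F +
      ENNReal.ofReal (∑ k, α l k) * ∑ k, R k x₀) atTop (𝓝 0) := by
    simpa using (hdata.add (ENNReal.Tendsto.const_mul hd (Or.inr ENNReal.ofNat_ne_top))).add
      hpenalty
  have hx'K : ∀ l, x' l ∈ K := fun l => Set.mem_insert_of_mem _ (Set.mem_insert_of_mem _ ⟨l, rfl⟩)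
  have hy'L : ∀ l, y' l ∈ L := fun l => Set.mem_insert_of_mem _ ⟨l, rfl⟩
  have hres : Tendsto (fun l => S (F (x' l)) (y' l)) atTop (𝓝 0) := by
    have h := tendsto_of_tendsto_of_tendsto_of_le_of_le tendsto_const_nhds hbound
      (fun _ => zero_le) fun l => ofReal_residual_le_of_tik_le S R (hα l)
        (hx'K l) (Set.mem_insert x₀ _) (hy'L l) hx₀sol (hmin l x₀)
    rw [← ENNReal.tendsto_toReal_zero_iff fun _ => ENNReal.ofReal_ne_top] at h
    simpa only [ENNReal.toReal_ofReal (hS0 _ _)] using h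
  have hzero : S (F xdag) y = 0 :=
    le_antisymm (hres.liminf_eq ▸ hF.1 x' xdag y' y hxdag hy) (hS0 _ _)
  exact ⟨hzero, (hSdef _ _).1 hzero⟩

/-- in the setting of the convergence theorem, the regularised residual
vanishes in the limit: if `x^(l)` minimises `T(·; α^(l), y^(l), F^(l))`, `x^(l) → x†`
in `τ`, `y^(l) → y` in `σ`, `F^(l) → F` in the `d_{K,L}`-sense, `F(x₀) = y` for some
`x₀ ∈ D`, `S(y,y^(l)) + d_{K,L}(F^(l),F) → 0` and `Σ_k α_k^(l) → 0`, then
`S(F(x†), y) = 0` and hence `F(x†) = y`. -/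
theorem residual_vanishes {X Y : Type*} [TopologicalSpace X] {n : ℕ}
    (S : Y → Y → ℝ) (hS0 : ∀ y z : Y, 0 ≤ S y z) (hSdef : ∀ y z : Y, S y z = 0 ↔ y = z)
    (R : Fin n → X → ℝ≥0∞)
    (hcoer : ∀ k, SeqCoercive (R k)) (hlsc : ∀ k, SeqLSC (R k))
    (F : X → Y) (F' : ℕ → X → Y) (hF : MemFtau S R F) (hF' : ∀ l, MemFtau S R (F' l))
    (hop : OpTendsto S F' F)
    (y : Y) (x₀ : X) (hx₀D : ∀ k, R k x₀ ≠ ⊤) (hx₀sol : F x₀ = y)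
    (y' : ℕ → Y) (hy : SigmaTendsto S y' y)
    (α : ℕ → Fin n → ℝ) (hα : ∀ l k, 0 ≤ α l k) (hαne : ∀ l, α l ≠ 0)
    (K : Set X) (hK : K = {x : X | ∃ k, R k x ≤ R k x₀ + 1})
    (L : Set Y) (hL : L = insert y (Set.range y'))
    (hnoise : Tendsto (fun l => ENNReal.ofReal (S y (y' l)) + dKL S K L (F' l) F)
        atTop (nhds 0))
    (hαto0 : Tendsto (fun l => ∑ k, α l k) atTop (nhds 0))
    (x' : ℕ → X)
    (hmin : ∀ l x, Tik S R (α l) (y' l) (F' l) (x' l) ≤ Tik S R (α l) (y' l) (F' l) x)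
    (xdag : X) (hxdag : Tendsto x' atTop (nhds xdag)) :
    S (F xdag) y = 0 ∧ F xdag = y :=
  residual_vanishes_general S hS0 hSdef R F F' hF hop y x₀ hx₀D hx₀sol y' hy α hα hαto0 x' hmin xdag
    hxdag
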